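/- arXiv:2206.09471 — 2 statements merged into one kernel-verified Lean document; each statement's English description precedes it below -/
import Mathlib

section
/- Let V be a finite-dimensional real inner product space and W a finite subgroup of the orthogonal group of V generated by the set T of all reflections it contains, and let w ∈ W be a quasi-Coxeter element. Then the map x ↦ Fix(x) is a bijection from [1,w] onto 𝓕(w) := {Fix(x) : x ∈ [1,w]}, and for all x, y ∈ [1,w] one has x ≼ y if and only if Fix(y) ⊆ Fix(x). In other words, Fix is an anti-isomorphism from the poset ([1,w], ≼) to the poset (𝓕(w), ⊆). -/
/-! Common definitions: reflection length, absolute order, interval groups,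
quasi-Coxeter elements, Artin groups, Carter-diagram presentations. -/

section Defs

variable {W : Type*} [Group W]

/-- Reflection length of `x` with respect to a generating set `T` of reflections. -/
noncomputable def reflLen (T : Set W) (x : W) : ℕ :=
  sInf {k : ℕ | ∃ l : List W, (∀ t ∈ l, t ∈ T) ∧ l.length = k ∧ l.prod = x}

/-- `l` is a reduced `T`-decomposition of `x`. -/
def IsRedDecomp (T : Set W) (x : W) (l : List W) : Prop :=
  (∀ t ∈ l, t ∈ T) ∧ l.prod = x ∧ l.length = reflLen T x

/-- The absolute order: `x ≼ y` iff `ℓ_T(y) = ℓ_T(x) + ℓ_T(x⁻¹y)`. -/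
def absLe (T : Set W) (x y : W) : Prop :=
  reflLen T y = reflLen T x + reflLen T (x⁻¹ * y)

/-- The interval `[1,w]` of left divisors of `w`. -/
def absInterval (T : Set W) (w : W) : Set W := {x | absLe T x w}

/-- The defining relations of the interval group `G([1,w])`: one generator for each
element of `[1,w]`, and a relation `𝐮𝐯 = 𝐫` whenever `uv = r` and lengths add up. -/
def intervalRels (T : Set W) (w : W) : Set (FreeGroup (absInterval T w)) :=
  {rel | ∃ u v r : absInterval T w, (u : W) * (v : W) = (r : W) ∧
    reflLen T (r : W) = reflLen T (u : W) + reflLen T (v : W) ∧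
    rel = FreeGroup.of u * FreeGroup.of v * (FreeGroup.of r)⁻¹}

/-- The interval group `G([1,w])`. -/
abbrev IntervalGroup (T : Set W) (w : W) : Type _ := PresentedGroup (intervalRels T w)

/-- `w` is a quasi-Coxeter element with respect to the reflection set `T`:
it has a reduced `T`-decomposition generating the whole group. -/
def IsQuasiCoxeterElem (T : Set W) (w : W) : Prop :=
  ∃ l : List W, IsRedDecomp T w l ∧ Subgroup.closure {t | t ∈ l} = ⊤

/-- The poset `([1,w], ≼)` is a lattice: every pair of elements of the interval has a
least upper bound and a greatest lower bound within the interval. -/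
def IsLatticeInterval (T : Set W) (w : W) : Prop :=
  ∀ x ∈ absInterval T w, ∀ y ∈ absInterval T w,
    (∃ z ∈ absInterval T w, absLe T x z ∧ absLe T y z ∧
      ∀ z' ∈ absInterval T w, absLe T x z' → absLe T y z' → absLe T z z') ∧
    (∃ z ∈ absInterval T w, absLe T z x ∧ absLe T z y ∧
      ∀ z' ∈ absInterval T w, absLe T z' x → absLe T z' y → absLe T z' z)

end Defs

section Cox

variable {B : Type*} {W : Type*} [Group W] {M : CoxeterMatrix B}

/-- The set of reflections of a Coxeter system. -/
def refls (cs : CoxeterSystem M W) : Set W := {t | cs.IsReflection t}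

/-- `w` is a Coxeter element: a conjugate of a product of all the simple reflections
in some order. -/
def IsCoxeterElement (cs : CoxeterSystem M W) (w : W) : Prop :=
  ∃ (g : W) (l : List B), l.Nodup ∧ (∀ i : B, i ∈ l) ∧
    w = g * (l.map cs.simple).prod * g⁻¹

/-- `w` is a proper quasi-Coxeter element: quasi-Coxeter but not a Coxeter element. -/
def IsProperQuasiCoxeterElem (cs : CoxeterSystem M W) (w : W) : Prop :=
  IsQuasiCoxeterElem (refls cs) w ∧ ¬ IsCoxeterElement cs w

end Cox

section Artin

/-- The alternating word `i j i j ⋯` of length `n`, as an element of the free group. -/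
def altWord {X : Type*} (i j : X) : ℕ → FreeGroup X
  | 0 => 1
  | n + 1 => FreeGroup.of i * altWord j i n

/-- The braid relators of the Artin group of a Coxeter matrix. -/
def artinRels {B : Type*} (M : CoxeterMatrix B) : Set (FreeGroup B) :=
  {r | ∃ i j : B, i ≠ j ∧
    r = altWord i j (M.M i j) * (altWord j i (M.M i j))⁻¹}

/-- The Artin group of a Coxeter matrix: same generators, braid relations only. -/
abbrev ArtinGroup {B : Type*} (M : CoxeterMatrix B) : Type _ := PresentedGroup (artinRels M)

end Artin

section Words

open scoped commutatorElement

variable {G : Type*} [Group G]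

/-- The twisted cycle commutator `tc(a,b,c,d) = [a, b⁻¹cdc⁻¹b]`. -/
def tcw (a b c d : G) : G := ⁅a, b⁻¹ * c * d * c⁻¹ * b⁆

/-- The cycle commutator `cc(a,b,c,d) = [a, bcdc⁻¹b⁻¹]`. -/
def ccw (a b c d : G) : G := ⁅a, b * c * d * c⁻¹ * b⁻¹⁆

/-- The braid relator `aba(bab)⁻¹`. -/
def braidw (a b : G) : G := a * b * a * (b * a * b)⁻¹

/-- The commutation relator `ab(ba)⁻¹`. -/
def commw (a b : G) : G := a * b * (b * a)⁻¹

end Words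

section Graph

variable {X : Type*}

/-- The braid relations `R(Δ)` of a graph with adjacency relation `adj`. -/
def graphRels (adj : X → X → Prop) : Set (FreeGroup X) :=
  {r | ∃ i j : X, i ≠ j ∧
    ((adj i j ∧ r = braidw (FreeGroup.of i) (FreeGroup.of j)) ∨
     (¬ adj i j ∧ r = commw (FreeGroup.of i) (FreeGroup.of j)))}

/-- `(a,b,c,d)` is a (chordless) 4-cycle of the graph with adjacency `adj`. -/
def IsFourCycle (adj : X → X → Prop) (a b c d : X) : Prop :=
  a ≠ b ∧ a ≠ c ∧ a ≠ d ∧ b ≠ c ∧ b ≠ d ∧ c ≠ d ∧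
  adj a b ∧ adj b c ∧ adj c d ∧ adj d a ∧ ¬ adj a c ∧ ¬ adj b d

/-- Twisted cycle commutator relators, one for each 4-cycle of the graph. -/
def tcRels (adj : X → X → Prop) : Set (FreeGroup X) :=
  {r | ∃ a b c d : X, IsFourCycle adj a b c d ∧
    r = tcw (FreeGroup.of a) (FreeGroup.of b) (FreeGroup.of c) (FreeGroup.of d)}

end Graph

section Dn

/-- Half of the adjacency relation of the Carter diagram `Δ_{m,n}` (vertices labelled
`1,…,n`): the path `2–⋯–m`, the 4-cycle `(1, m, m+1, m+2)` and the path `(m+2)–⋯–n`. -/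
def deltaAdjHalf (m i j : ℕ) : Prop :=
  (2 ≤ i ∧ i + 1 ≤ m ∧ j = i + 1) ∨
  (i = 1 ∧ j = m) ∨ (i = m ∧ j = m + 1) ∨ (i = m + 1 ∧ j = m + 2) ∨
  (i = 1 ∧ j = m + 2) ∨
  (m + 2 ≤ i ∧ j = i + 1)

/-- The adjacency relation of the Carter diagram `Δ_{m,n}` (vertices labelled `1,…,n`). -/
def deltaAdj (m i j : ℕ) : Prop := deltaAdjHalf m i j ∨ deltaAdjHalf m j i

/-- The defining relators of `G_{m,n}`: the braid relations of `Δ_{m,n}` together with the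
twisted cycle commutator of the 4-cycle `(1, m, m+1, m+2)`.  Vertex `i+1` of `Δ_{m,n}`
corresponds to the index `i : Fin n`. -/
def dmnRels (n m : ℕ) : Set (FreeGroup (Fin n)) :=
  graphRels (fun i j : Fin n => deltaAdj m (i.1 + 1) (j.1 + 1)) ∪
  {r | ∃ a b c d : Fin n,
    a.1 + 1 = 1 ∧ b.1 + 1 = m ∧ c.1 + 1 = m + 1 ∧ d.1 + 1 = m + 2 ∧
    r = tcw (FreeGroup.of a) (FreeGroup.of b) (FreeGroup.of c) (FreeGroup.of d)}

/-- The group `G_{m,n}`. -/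
abbrev Gmn (n m : ℕ) : Type := PresentedGroup (dmnRels n m)

end Dn

section En

/-- Half of the adjacency relation of the `Eₙ` Coxeter diagram (`0`-indexed, following
Mathlib's convention for `CoxeterMatrix.E₆`, `E₇`, `E₈`: edges `{0,2}`, `{1,3}` and
`{i,i+1}` for `2 ≤ i`). -/
def eAdjHalf (i j : ℕ) : Prop := (i = 0 ∧ j = 2) ∨ (i = 1 ∧ j = 3) ∨ (2 ≤ i ∧ j = i + 1)

/-- Adjacency of the `Eₙ` Coxeter diagram. -/
def eAdj (i j : ℕ) : Prop := eAdjHalf i j ∨ eAdjHalf j i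

instance (i j : ℕ) : Decidable (eAdj i j) := by unfold eAdj eAdjHalf; infer_instance

/-- The Coxeter matrix of type `Eₙ`; for `n = 6, 7, 8` it is the standard Coxeter matrix
of type `E₆`, `E₇`, `E₈` (it agrees with Mathlib's `CoxeterMatrix.E₆`, `E₇`, `E₈`). -/
def EMat (n : ℕ) : CoxeterMatrix (Fin n) where
  M := Matrix.of fun i j : Fin n => if i = j then 1 else if eAdj i.1 j.1 then 3 else 2
  isSymm := by
    unfold Matrix.IsSymm
    ext i j
    simp only [Matrix.transpose_apply, Matrix.of_apply]
    exact if_congr eq_comm rfl (if_congr (or_comm) rfl rfl)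
  diagonal := by intro i; simp
  off_diagonal := by
    intro i j h
    simp only [Matrix.of_apply, if_neg h]
    split <;> omega

end En

section ReflGp

variable {V : Type*} [NormedAddCommGroup V] [InnerProductSpace ℝ V]

/-- `f` is an (orthogonal) reflection of `V`: it fixes a hyperplane pointwise and acts as
`-1` on its orthogonal complement. -/
def IsOrthoReflection (f : V ≃ₗᵢ[ℝ] V) : Prop :=
  ∃ v : V, v ≠ 0 ∧ f v = -v ∧ ∀ u : V, inner ℝ u v = (0 : ℝ) → f u = u

/-- The set of reflections contained in a subgroup `W` of the orthogonal group of `V`. -/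
def orthoRefls (W : Subgroup (V ≃ₗᵢ[ℝ] V)) : Set W :=
  {t | IsOrthoReflection (t : V ≃ₗᵢ[ℝ] V)}

/-- The fixed space `Fix(x)` of `x`. -/
def fixedSet (W : Subgroup (V ≃ₗᵢ[ℝ] V)) (x : W) : Set V :=
  {v | (x : V ≃ₗᵢ[ℝ] V) v = v}

/-- The pointwise stabilizer in `W` of the fixed space of `x`. -/
def fixStab (W : Subgroup (V ≃ₗᵢ[ℝ] V)) (x : W) : Subgroup W where
  carrier := {g | ∀ v : V, (x : V ≃ₗᵢ[ℝ] V) v = v → (g : V ≃ₗᵢ[ℝ] V) v = v}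
  one_mem' := by intro v _; rfl
  mul_mem' := by
    intro a b ha hb v hv
    have h : ((a * b : W) : V ≃ₗᵢ[ℝ] V) v = (a : V ≃ₗᵢ[ℝ] V) ((b : V ≃ₗᵢ[ℝ] V) v) := rfl
    rw [h, hb v hv, ha v hv]
  inv_mem' := by
    intro a ha v hv
    have h1 : (a : V ≃ₗᵢ[ℝ] V) v = v := ha v hv
    calc ((a⁻¹ : W) : V ≃ₗᵢ[ℝ] V) v = (a : V ≃ₗᵢ[ℝ] V).symm v := rfl
      _ = (a : V ≃ₗᵢ[ℝ] V).symm ((a : V ≃ₗᵢ[ℝ] V) v) := by rw [h1]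
      _ = v := (a : V ≃ₗᵢ[ℝ] V).symm_apply_apply v

end ReflGp

/-!
By Carter's lemma the reflection length of `x ∈ W` is `codim Fix(x)`, so `x ≼ y` says
`codim Fix(y) = codim Fix(x) + codim Fix(x⁻¹y)`, that is, `Fix(y) = Fix(x) ∩ Fix(x⁻¹y)` and
`Fix(x) + Fix(x⁻¹y) = V`; in particular `Fix(y) ⊆ Fix(x)`. Conversely, for `x, y ≼ w` these
conditions identify `Fix(x⁻¹w)` with `(1 - w)⁻¹(Fix(x)ᗮ)`, and splitting `V = Fix(y) ⊕ Fix(y⁻¹w)`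
shows that, once `Fix(y) ⊆ Fix(x)`, `x` and `y` agree on `(1 - y)⁻¹(Fix(x)ᗮ)`, a subspace of
dimension `dim Fix(y) + codim Fix(x)`: this is `x ≼ y`. Injectivity follows by antisymmetry.

For Carter's lemma, `codim Fix` is subadditive and at most `1` on reflections; conversely, for
`x ≠ 1` it suffices to find a root in `Fix(x)ᗮ`, because multiplying by its reflection lowers
`codim Fix`. If there were none, a generic vector of `Fix(x)` would be regular and fixed by `x`,
whereas a nontrivial element of a finite reflection group sends some simple root (for a simple
system attached to that vector) to a negative root.
-/

open Submodule Module RealInnerProductSpace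

section Reflection

variable {V : Type*} [NormedAddCommGroup V] [InnerProductSpace ℝ V]

noncomputable def reflectionAlong (α : V) : V ≃ₗᵢ[ℝ] V := reflection (ℝ ∙ α)ᗮ

theorem reflectionAlong_self (α : V) : reflectionAlong α α = -α :=
  reflection_orthogonalComplement_singleton_eq_neg α

theorem reflectionAlong_apply_of_inner_eq_zero {α v : V} (h : ⟪α, v⟫ = 0) :
    reflectionAlong α v = v :=
  reflection_mem_subspace_eq_self (mem_orthogonal_singleton_iff_inner_right.2 h)

theorem reflectionAlong_reflectionAlong (α v : V) :
    reflectionAlong α (reflectionAlong α v) = v :=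
  reflection_reflection _ v

theorem reflectionAlong_mul_self (α : V) : reflectionAlong α * reflectionAlong α = 1 :=
  reflection_mul_reflection _

theorem reflectionAlong_inv (α : V) : (reflectionAlong α)⁻¹ = reflectionAlong α :=
  inv_eq_of_mul_eq_one_right (reflectionAlong_mul_self α)

theorem reflectionAlong_smul {c : ℝ} (hc : c ≠ 0) (α : V) :
    reflectionAlong (c • α) = reflectionAlong α := by
  simp only [reflectionAlong, span_singleton_smul_eq (IsUnit.mk0 c hc)]

theorem reflectionAlong_neg (α : V) : reflectionAlong (-α) = reflectionAlong α := by
  simpa using reflectionAlong_smul (neg_ne_zero.2 one_ne_zero) α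

theorem reflectionAlong_apply {α : V} (hα : ‖α‖ = 1) (v : V) :
    reflectionAlong α v = v - (2 * ⟪α, v⟫) • α := by
  rw [reflectionAlong, reflection_orthogonal_apply, reflection_singleton_apply, hα]
  module

theorem reflectionAlong_sub_apply {u v : V} (h : ‖u‖ = ‖v‖) :
    reflectionAlong (u - v) u = v :=
  reflection_sub h

theorem conj_reflectionAlong (g : V ≃ₗᵢ[ℝ] V) (α : V) :
    g * reflectionAlong α * g⁻¹ = reflectionAlong (g α) := by
  have : (ℝ ∙ g α)ᗮ = (ℝ ∙ α)ᗮ.map (g.toLinearEquiv : V →ₗ[ℝ] V) := by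
    rw [map_orthogonal_equiv, map_span, Set.image_singleton]; rfl
  simp only [reflectionAlong, this, reflection_map]
  rfl

theorem isOrthoReflection_reflectionAlong {α : V} (hα : α ≠ 0) :
    IsOrthoReflection (reflectionAlong α) :=
  ⟨α, hα, reflectionAlong_self α,
    fun _ hu => reflectionAlong_apply_of_inner_eq_zero (by rwa [real_inner_comm])⟩

theorem IsOrthoReflection.exists_eq_reflectionAlong {f : V ≃ₗᵢ[ℝ] V} (hf : IsOrthoReflection f) :
    ∃ α : V, ‖α‖ = 1 ∧ f = reflectionAlong α := by
  obtain ⟨v, hv, hfv, hfix⟩ := hf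
  have heq : ⊤ ≤ LinearMap.eqLocus (f : V →ₗ[ℝ] V) (reflectionAlong v : V →ₗ[ℝ] V) := by
    rw [← sup_orthogonal_of_hasOrthogonalProjection (K := ℝ ∙ v)]
    refine sup_le (span_singleton_le_iff_mem _ _ |>.2 ?_) fun u hu => ?_
    · exact (hfv.trans (reflectionAlong_self v).symm :)
    · have hu : ⟪u, v⟫ = 0 := mem_orthogonal_singleton_iff_inner_left.1 hu
      exact ((hfix u hu).trans
        (reflectionAlong_apply_of_inner_eq_zero (by rwa [real_inner_comm])).symm :)
  refine ⟨‖v‖⁻¹ • v, by simp [norm_smul, norm_ne_zero_iff.2 hv], ?_⟩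
  rw [reflectionAlong_smul (inv_ne_zero (norm_ne_zero_iff.2 hv))]
  ext u
  exact heq trivial

theorem exists_list_of_mem_closure_reflectionAlong {S : Set V} {x : V ≃ₗᵢ[ℝ] V}
    (hx : x ∈ Subgroup.closure (reflectionAlong '' S)) :
    ∃ l : List V, (∀ a ∈ l, a ∈ S) ∧ (l.map reflectionAlong).prod = x := by
  induction hx using Subgroup.closure_induction_left with
  | one => exact ⟨[], by simp, rfl⟩
  | mul_left _ hs _ _ ih =>
    obtain ⟨δ, hδ, rfl⟩ := hs
    obtain ⟨l, hl, rfl⟩ := ih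
    exact ⟨δ :: l, by simpa [hδ] using hl, by simp⟩
  | inv_mul_cancel _ hs _ _ ih =>
    obtain ⟨δ, hδ, rfl⟩ := hs
    obtain ⟨l, hl, rfl⟩ := ih
    exact ⟨δ :: l, by simpa [hδ] using hl, by simp [reflectionAlong_inv]⟩

end Reflection

section FixedSpace

variable {V : Type*} [NormedAddCommGroup V] [InnerProductSpace ℝ V]

noncomputable def fixSpace (g : V ≃ₗᵢ[ℝ] V) : Submodule ℝ V :=
  LinearMap.eqLocus (g : V →ₗ[ℝ] V) LinearMap.id

noncomputable def movedSpace (g : V ≃ₗᵢ[ℝ] V) : Submodule ℝ V := (fixSpace g)ᗮ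

noncomputable def displacement (g : V ≃ₗᵢ[ℝ] V) : V →ₗ[ℝ] V := LinearMap.id - (g : V →ₗ[ℝ] V)

theorem mem_fixSpace {g : V ≃ₗᵢ[ℝ] V} {v : V} : v ∈ fixSpace g ↔ g v = v := Iff.rfl

theorem displacement_apply (g : V ≃ₗᵢ[ℝ] V) (v : V) : displacement g v = v - g v := rfl

theorem ker_displacement (g : V ≃ₗᵢ[ℝ] V) : LinearMap.ker (displacement g) = fixSpace g := by
  ext v
  rw [LinearMap.mem_ker, displacement_apply, sub_eq_zero, mem_fixSpace, eq_comm]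

theorem fixSpace_eq_top_iff {g : V ≃ₗᵢ[ℝ] V} : fixSpace g = ⊤ ↔ g = 1 := by
  rw [eq_top_iff]
  exact ⟨fun h => LinearIsometryEquiv.ext fun v => h trivial,
    fun h v _ => by simp [h, mem_fixSpace]⟩

theorem fixSpace_inf_le_fixSpace_mul (a b : V ≃ₗᵢ[ℝ] V) :
    fixSpace a ⊓ fixSpace b ≤ fixSpace (a * b) := fun v ⟨ha, hb⟩ => by
  change a (b v) = v
  rw [mem_fixSpace.1 hb, mem_fixSpace.1 ha]

theorem mem_fixSpace_inv_mul {a b : V ≃ₗᵢ[ℝ] V} {v : V} :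
    v ∈ fixSpace (a⁻¹ * b) ↔ a v = b v := by
  change a.symm (b v) = v ↔ _
  rw [a.symm_apply_eq, eq_comm]

theorem le_fixSpace_reflectionAlong_mul {g : V ≃ₗᵢ[ℝ] V} {α : V} (hα : α ∈ movedSpace g) :
    fixSpace g ≤ fixSpace (reflectionAlong α * g) := fun v hv => by
  change reflectionAlong α (g v) = v
  rw [mem_fixSpace.1 hv, reflectionAlong_apply_of_inner_eq_zero]
  exact inner_left_of_mem_orthogonal hv hα

noncomputable def movedRank (g : V ≃ₗᵢ[ℝ] V) : ℕ := finrank ℝ (movedSpace g)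

theorem movedRank_reflectionAlong_le_one (α : V) : movedRank (reflectionAlong α) ≤ 1 := by
  have hle : movedSpace (reflectionAlong α) ≤ ℝ ∙ α := by
    rw [movedSpace, ← orthogonal_orthogonal (ℝ ∙ α)]
    exact orthogonal_le fun v hv =>
      reflectionAlong_apply_of_inner_eq_zero (mem_orthogonal_singleton_iff_inner_right.1 hv)
  exact (Submodule.finrank_mono hle).trans ((finrank_span_le_card {α}).trans (by simp))

variable [FiniteDimensional ℝ V]

theorem finrank_fixSpace_add_movedRank (g : V ≃ₗᵢ[ℝ] V) :
    finrank ℝ (fixSpace g) + movedRank g = finrank ℝ V :=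
  finrank_add_finrank_orthogonal _

theorem movedRank_eq_zero_iff {g : V ≃ₗᵢ[ℝ] V} : movedRank g = 0 ↔ g = 1 := by
  rw [movedRank, finrank_eq_zero, movedSpace, orthogonal_eq_bot_iff, fixSpace_eq_top_iff]

theorem movedRank_mul_le (a b : V ≃ₗᵢ[ℝ] V) : movedRank (a * b) ≤ movedRank a + movedRank b := by
  have hle : movedSpace (a * b) ≤ movedSpace a ⊔ movedSpace b := by
    rw [movedSpace, movedSpace, movedSpace, ← orthogonal_le_orthogonal_iff,
      ← inf_orthogonal, orthogonal_orthogonal, orthogonal_orthogonal, orthogonal_orthogonal]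
    exact fixSpace_inf_le_fixSpace_mul a b
  have := finrank_sup_add_finrank_inf_eq (movedSpace a) (movedSpace b)
  have := Submodule.finrank_mono hle
  unfold movedRank
  omega

theorem range_displacement (g : V ≃ₗᵢ[ℝ] V) : LinearMap.range (displacement g) = movedSpace g := by
  refine eq_of_le_of_finrank_le ?_ ?_
  · rintro _ ⟨u, rfl⟩
    refine (mem_orthogonal' _ _).2 fun f (hf : g f = f) => ?_
    rw [displacement_apply, inner_sub_left]
    nth_rewrite 2 [← hf]
    rw [g.inner_map_map, sub_self]
  · have := LinearMap.finrank_range_add_finrank_ker (displacement g)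
    have := finrank_fixSpace_add_movedRank g
    rw [ker_displacement] at *
    unfold movedRank at *
    omega

/-- Writing `α = u - g u`, the reflection along `α` sends `g u` back to `u`, so `u` is a new
fixed vector of `reflectionAlong α * g`. -/
theorem movedRank_reflectionAlong_mul_lt {g : V ≃ₗᵢ[ℝ] V} {α : V} (hα₀ : α ≠ 0)
    (hα : α ∈ movedSpace g) : movedRank (reflectionAlong α * g) < movedRank g := by
  obtain ⟨u, hu⟩ : α ∈ LinearMap.range (displacement g) := (range_displacement g).symm ▸ hα
  rw [displacement_apply] at hu
  have hnew : u ∈ fixSpace (reflectionAlong α * g) := by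
    have : reflectionAlong α u = g u := hu ▸ reflectionAlong_sub_apply (g.norm_map u).symm
    change reflectionAlong α (g u) = u
    rw [← this, reflectionAlong_reflectionAlong]
  have hu : u ∉ fixSpace g := fun h => hα₀ (by rw [← hu, mem_fixSpace.1 h, sub_self])
  have hlt : fixSpace g < fixSpace (reflectionAlong α * g) :=
    lt_of_le_of_ne (le_fixSpace_reflectionAlong_mul hα) fun h => hu (h ▸ hnew)
  have := Submodule.finrank_lt_finrank_of_lt hlt
  have := finrank_fixSpace_add_movedRank g
  have := finrank_fixSpace_add_movedRank (reflectionAlong α * g)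
  omega

end FixedSpace

theorem Submodule.finrank_comap_of_le_range {K E F : Type*} [DivisionRing K] [AddCommGroup E]
    [Module K E] [FiniteDimensional K E] [AddCommGroup F] [Module K F] (f : E →ₗ[K] F)
    {M : Submodule K F} (hM : M ≤ LinearMap.range f) :
    finrank K (M.comap f) = finrank K M + finrank K (LinearMap.ker f) := by
  have hrange : LinearMap.range (f.domRestrict (M.comap f)) = M := by
    rw [LinearMap.range_domRestrict, map_comap_eq, inf_eq_right.2 hM]
  have hker : LinearMap.ker f ≤ M.comap f := LinearMap.ker_le_comap f
  have := LinearMap.finrank_range_add_finrank_ker (f.domRestrict (M.comap f))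
  rwa [hrange, LinearMap.ker_domRestrict, (comapSubtypeEquivOfLe hker).finrank_eq,
    eq_comm] at this

section MovedRankOrder

variable {V : Type*} [NormedAddCommGroup V] [InnerProductSpace ℝ V] [FiniteDimensional ℝ V]

/-- The partial order of Brady and Watt on the orthogonal group. -/
def MovedRankLE (a b : V ≃ₗᵢ[ℝ] V) : Prop := movedRank b = movedRank a + movedRank (a⁻¹ * b)

namespace MovedRankLE

variable {a b : V ≃ₗᵢ[ℝ] V}

theorem fixSpace_eq_inf (h : MovedRankLE a b) : fixSpace b = fixSpace a ⊓ fixSpace (a⁻¹ * b) := by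
  have hle : fixSpace a ⊓ fixSpace (a⁻¹ * b) ≤ fixSpace b := by
    simpa using fixSpace_inf_le_fixSpace_mul a (a⁻¹ * b)
  refine (eq_of_le_of_finrank_le hle ?_).symm
  have := finrank_sup_add_finrank_inf_eq (fixSpace a) (fixSpace (a⁻¹ * b))
  have := Submodule.finrank_le (fixSpace a ⊔ fixSpace (a⁻¹ * b))
  have := finrank_fixSpace_add_movedRank a
  have := finrank_fixSpace_add_movedRank (a⁻¹ * b)
  have := finrank_fixSpace_add_movedRank b
  unfold MovedRankLE at h
  omega

theorem fixSpace_le (h : MovedRankLE a b) : fixSpace b ≤ fixSpace a :=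
  h.fixSpace_eq_inf ▸ inf_le_left

theorem sup_fixSpace_eq_top (h : MovedRankLE a b) : fixSpace a ⊔ fixSpace (a⁻¹ * b) = ⊤ := by
  refine eq_top_of_finrank_eq ?_
  have := finrank_sup_add_finrank_inf_eq (fixSpace a) (fixSpace (a⁻¹ * b))
  have := Submodule.finrank_le (fixSpace a ⊔ fixSpace (a⁻¹ * b))
  have := finrank_fixSpace_add_movedRank a
  have := finrank_fixSpace_add_movedRank (a⁻¹ * b)
  have := finrank_fixSpace_add_movedRank b
  rw [← h.fixSpace_eq_inf] at *
  unfold MovedRankLE at h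
  omega

theorem fixSpace_inv_mul_eq_comap (h : MovedRankLE a b) :
    fixSpace (a⁻¹ * b) = (movedSpace a).comap (displacement b) := by
  have hmov : movedSpace a ≤ LinearMap.range (displacement b) :=
    range_displacement b ▸ orthogonal_le h.fixSpace_le
  have hle : fixSpace (a⁻¹ * b) ≤ (movedSpace a).comap (displacement b) := fun v hv => by
    rw [mem_comap, ← range_displacement, displacement_apply, ← mem_fixSpace_inv_mul.1 hv]
    exact ⟨v, rfl⟩
  refine eq_of_le_of_finrank_le hle ?_
  have := finrank_comap_of_le_range (displacement b) hmov
  have := finrank_fixSpace_add_movedRank b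
  have := finrank_fixSpace_add_movedRank (a⁻¹ * b)
  rw [ker_displacement] at *
  unfold MovedRankLE movedRank at *
  omega

/-- `x` agrees with `y` on the preimage of `movedSpace x` under `1 - y`: decompose a vector along
`V = Fix(y) ⊕ Fix(y⁻¹w)` and use the description of `Fix(x⁻¹w)` given by `x ≤ w`. -/
theorem of_fixSpace_le {x y w : V ≃ₗᵢ[ℝ] V} (hx : MovedRankLE x w) (hy : MovedRankLE y w)
    (hfix : fixSpace y ≤ fixSpace x) : MovedRankLE x y := by
  have hagree : (movedSpace x).comap (displacement y) ≤ fixSpace (x⁻¹ * y) := by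
    intro v hv
    obtain ⟨c, hc, d, hd, rfl⟩ := mem_sup.1 (hy.sup_fixSpace_eq_top ▸ mem_top : v ∈ _)
    have hyc : y c = c := mem_fixSpace.1 hc
    have hyd : y d = w d := mem_fixSpace_inv_mul.1 hd
    have hxd : x d = w d := by
      refine mem_fixSpace_inv_mul.1 (hx.fixSpace_inv_mul_eq_comap ▸ ?_)
      simpa [mem_comap, displacement_apply, hyc, hyd] using hv
    rw [mem_fixSpace_inv_mul, map_add, map_add, mem_fixSpace.1 (hfix hc), hyc, hxd, hyd]
  have hmov : movedSpace x ≤ LinearMap.range (displacement y) :=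
    range_displacement y ▸ orthogonal_le hfix
  have := finrank_comap_of_le_range (displacement y) hmov
  have := Submodule.finrank_mono hagree
  have := finrank_fixSpace_add_movedRank y
  have := finrank_fixSpace_add_movedRank (x⁻¹ * y)
  have := movedRank_mul_le x (x⁻¹ * y)
  rw [ker_displacement, mul_inv_cancel_left] at *
  unfold MovedRankLE movedRank at *
  omega

theorem antisymm {a b : V ≃ₗᵢ[ℝ] V} (hab : MovedRankLE a b) (hba : MovedRankLE b a) : a = b := by
  unfold MovedRankLE at hab hba
  rw [← inv_mul_eq_one, ← movedRank_eq_zero_iff]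
  omega

end MovedRankLE

end MovedRankOrder

theorem PointedCone.mem_hull_finset_iff {R E : Type*} [Semiring R] [PartialOrder R]
    [IsOrderedRing R] [AddCommMonoid E] [Module R E] {s : Finset E} {x : E} :
    x ∈ hull R (s : Set E) ↔ ∃ c : E → R, (∀ y, 0 ≤ c y) ∧ ∑ a ∈ s, c a • a = x := by
  rw [hull, Submodule.mem_span_finset]
  constructor
  · rintro ⟨c, -, rfl⟩
    exact ⟨fun y => c y, fun y => (c y).2, rfl⟩
  · rintro ⟨c, hc, rfl⟩
    classical
    refine ⟨fun y => if y ∈ s then ⟨c y, hc y⟩ else 0, fun y hy => ?_, ?_⟩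
    · by_contra hys
      exact hy (if_neg hys)
    · exact Finset.sum_congr rfl fun y hy => by simp [hy, Nonneg.mk_smul]

section Obtuse

variable {V : Type*} [NormedAddCommGroup V] [InnerProductSpace ℝ V]

/-- The positive and negative parts of a vanishing combination are equal, and pairwise obtuse
angles make the inner product of that common vector with itself nonpositive. -/
theorem nonpos_of_sum_smul_eq_zero_of_inner_nonpos {S : Finset V} {z : V}
    (hz : ∀ δ ∈ S, 0 < ⟪z, δ⟫) (hS : ∀ δ ∈ S, ∀ δ' ∈ S, δ ≠ δ' → ⟪δ, δ'⟫ ≤ 0)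
    {a : V → ℝ} (ha : ∑ δ ∈ S, a δ • δ = 0) : ∀ δ ∈ S, a δ ≤ 0 := by
  classical
  set P := S.filter (fun δ => 0 < a δ)
  set N := S.filter (fun δ => ¬ 0 < a δ)
  set σ := ∑ δ ∈ P, a δ • δ
  have hσ : σ = ∑ δ ∈ N, (-a δ) • δ := by
    rw [← Finset.sum_filter_add_sum_filter_not S (fun δ => 0 < a δ)] at ha
    simp only [neg_smul, Finset.sum_neg_distrib]
    exact eq_neg_of_add_eq_zero_left ha
  have hσσ : ⟪σ, σ⟫ ≤ 0 := by
    conv_lhs => enter [2]; rw [hσ]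
    simp only [σ, sum_inner, inner_sum, real_inner_smul_left, real_inner_smul_right]
    refine Finset.sum_nonpos fun δ hδ => Finset.sum_nonpos fun δ' hδ' => ?_
    obtain ⟨hδS, hpos⟩ := Finset.mem_filter.1 hδ
    obtain ⟨hδ'S, hnpos⟩ := Finset.mem_filter.1 hδ'
    have hobtuse := hS δ hδS δ' hδ'S (by rintro rfl; exact hnpos hpos)
    rw [real_inner_comm] at hobtuse
    exact mul_nonpos_of_nonneg_of_nonpos hpos.le
      (mul_nonpos_of_nonneg_of_nonpos (neg_nonneg.2 (not_lt.1 hnpos)) hobtuse)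
  have hzσ : ∑ δ ∈ P, a δ * ⟪z, δ⟫ = 0 := by
    have : ⟪z, σ⟫ = ∑ δ ∈ P, a δ * ⟪z, δ⟫ := by simp only [σ, inner_sum, real_inner_smul_right]
    rw [← this, real_inner_self_nonpos.1 hσσ, inner_zero_right]
  intro δ hδ
  by_contra hpos
  have hδP : δ ∈ P := Finset.mem_filter.2 ⟨hδ, not_le.1 hpos⟩
  have := Finset.sum_pos (fun δ hδ => mul_pos (Finset.mem_filter.1 hδ).2
    (hz δ (Finset.mem_filter.1 hδ).1)) ⟨δ, hδP⟩
  linarith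

theorem linearIndepOn_of_inner_nonpos {S : Finset V} {z : V} (hz : ∀ δ ∈ S, 0 < ⟪z, δ⟫)
    (hS : ∀ δ ∈ S, ∀ δ' ∈ S, δ ≠ δ' → ⟪δ, δ'⟫ ≤ 0) : LinearIndepOn ℝ id (S : Set V) := by
  refine linearIndepOn_finset_iff.2 fun a ha δ hδ => le_antisymm
    (nonpos_of_sum_smul_eq_zero_of_inner_nonpos hz hS ha δ hδ) ?_
  have : ∑ δ ∈ S, (-a δ) • δ = 0 := by simpa [neg_smul] using ha
  simpa using nonpos_of_sum_smul_eq_zero_of_inner_nonpos hz hS this δ hδ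

end Obtuse

section Roots

variable {V : Type*} [NormedAddCommGroup V] [InnerProductSpace ℝ V]

def roots (W : Subgroup (V ≃ₗᵢ[ℝ] V)) : Set V := {α | ‖α‖ = 1 ∧ reflectionAlong α ∈ W}

variable {W : Subgroup (V ≃ₗᵢ[ℝ] V)} {α : V}

theorem ne_zero_of_mem_roots (hα : α ∈ roots W) : α ≠ 0 := by
  rintro rfl
  simpa using hα.1

theorem neg_mem_roots (hα : α ∈ roots W) : -α ∈ roots W :=
  ⟨by rw [norm_neg, hα.1], by rw [reflectionAlong_neg]; exact hα.2⟩

theorem apply_mem_roots {g : V ≃ₗᵢ[ℝ] V} (hg : g ∈ W) (hα : α ∈ roots W) : g α ∈ roots W :=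
  ⟨by rw [g.norm_map, hα.1],
    conj_reflectionAlong g α ▸ W.mul_mem (W.mul_mem hg hα.2) (W.inv_mem hg)⟩

theorem eq_or_eq_neg_of_reflectionAlong_eq {β : V} (hα : ‖α‖ = 1) (hβ : ‖β‖ = 1)
    (h : reflectionAlong α = reflectionAlong β) : β = α ∨ β = -α := by
  have hβα : β = ⟪α, β⟫ • α := by
    have := reflectionAlong_apply hα β
    rw [h, reflectionAlong_self] at this
    apply smul_right_injective V (two_ne_zero (α := ℝ))
    simp only [smul_smul]
    rw [two_smul]
    linear_combination (norm := module) (-1 : ℝ) • this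
  have hc : |⟪α, β⟫| = 1 := by
    simpa [hα, hβ, norm_smul] using (congrArg norm hβα).symm
  rcases abs_eq zero_le_one |>.1 hc with hc | hc <;> rw [hc] at hβα
  · exact .inl (by simpa using hβα)
  · exact .inr (by simpa using hβα)

theorem roots_finite [Finite W] : (roots W).Finite := by
  have hfiber (t : V ≃ₗᵢ[ℝ] V) : {α : V | ‖α‖ = 1 ∧ reflectionAlong α = t}.Finite := by
    rcases Set.eq_empty_or_nonempty {α : V | ‖α‖ = 1 ∧ reflectionAlong α = t} with
      h | ⟨α₀, hα₀, rfl⟩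
    · simp [h]
    · refine (Set.toFinite {α₀, -α₀}).subset fun β ⟨hβ, h⟩ => ?_
      simpa using eq_or_eq_neg_of_reflectionAlong_eq hα₀ hβ h.symm
  refine ((Set.finite_range ((↑) : W → V ≃ₗᵢ[ℝ] V)).biUnion fun t _ => hfiber t).subset ?_
  intro α hα
  exact Set.mem_biUnion ⟨⟨_, hα.2⟩, rfl⟩ ⟨hα.1, rfl⟩

theorem mem_orthoRefls_iff {t : W} :
    t ∈ orthoRefls W ↔ ∃ α ∈ roots W, (t : V ≃ₗᵢ[ℝ] V) = reflectionAlong α := by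
  refine ⟨fun ht => ?_, fun ⟨α, hα, ht⟩ => ?_⟩
  · obtain ⟨α, hα, ht⟩ := IsOrthoReflection.exists_eq_reflectionAlong ht
    exact ⟨α, ⟨hα, ht ▸ t.2⟩, ht⟩
  · exact (ht ▸ isOrthoReflection_reflectionAlong (ne_zero_of_mem_roots hα) :)

theorem inv_mem_orthoRefls {t : W} (ht : t ∈ orthoRefls W) : t⁻¹ ∈ orthoRefls W := by
  obtain ⟨α, hα, h⟩ := mem_orthoRefls_iff.1 ht
  exact mem_orthoRefls_iff.2 ⟨α, hα, by rw [Subgroup.coe_inv, h, reflectionAlong_inv]⟩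

theorem closure_reflectionAlong_roots_le : Subgroup.closure (reflectionAlong '' roots W) ≤ W :=
  Subgroup.closure_le _ |>.2 <| Set.image_subset_iff.2 fun _ hα => hα.2

theorem closure_reflectionAlong_roots (hgen : Subgroup.closure (orthoRefls W) = ⊤) :
    Subgroup.closure (reflectionAlong '' roots W) = W := by
  refine le_antisymm closure_reflectionAlong_roots_le fun x hx => ?_
  have : x ∈ (Subgroup.closure (orthoRefls W)).map W.subtype := by
    rw [hgen]
    exact ⟨⟨x, hx⟩, trivial, rfl⟩
  rw [MonoidHom.map_closure] at this
  refine Subgroup.closure_mono ?_ this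
  rintro _ ⟨t, ht, rfl⟩
  obtain ⟨α, hα, ht⟩ := mem_orthoRefls_iff.1 ht
  exact ⟨α, hα, ht.symm⟩

end Roots

section SimpleSystem

open PointedCone

variable {V : Type*} [NormedAddCommGroup V] [InnerProductSpace ℝ V]

def posRoots (W : Subgroup (V ≃ₗᵢ[ℝ] V)) (z : V) : Set V := {α ∈ roots W | 0 < ⟪z, α⟫}

/-- Simple systems as in Humphreys, *Reflection groups and Coxeter groups*, §1.3; defining them by
minimal cardinality makes their existence immediate. -/
structure IsSimpleSystem (W : Subgroup (V ≃ₗᵢ[ℝ] V)) (z : V) (Δ : Finset V) : Prop where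
  regular : ∀ α ∈ roots W, ⟪z, α⟫ ≠ 0
  subset : ↑Δ ⊆ posRoots W z
  mem_hull : ∀ β ∈ posRoots W z, β ∈ hull ℝ (Δ : Set V)
  card_le : ∀ S : Finset V, ↑S ⊆ posRoots W z → (∀ β ∈ posRoots W z, β ∈ hull ℝ (S : Set V)) →
    Δ.card ≤ S.card

variable {W : Subgroup (V ≃ₗᵢ[ℝ] V)} {z : V}

theorem exists_isSimpleSystem [Finite W] (hz : ∀ α ∈ roots W, ⟪z, α⟫ ≠ 0) :
    ∃ Δ, IsSimpleSystem W z Δ := by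
  classical
  have hfin : (posRoots W z).Finite := roots_finite.subset fun _ hα => hα.1
  set P := hfin.toFinset
  have hP : ∀ β ∈ posRoots W z, β ∈ hull ℝ (P : Set V) := fun β hβ =>
    subset_hull (hfin.mem_toFinset.2 hβ)
  obtain ⟨Δ, hΔ, hmin⟩ := Finset.exists_min_image
    (P.powerset.filter fun S : Finset V => ∀ β ∈ posRoots W z, β ∈ hull ℝ (S : Set V)) Finset.card
    ⟨P, Finset.mem_filter.2 ⟨Finset.mem_powerset_self P, hP⟩⟩
  obtain ⟨hΔP, hΔ⟩ := Finset.mem_filter.1 hΔ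
  refine ⟨Δ, hz, fun x hx => hfin.mem_toFinset.1 (Finset.mem_powerset.1 hΔP hx), hΔ,
    fun S hS hSh => hmin S (Finset.mem_filter.2 ⟨Finset.mem_powerset.2 fun x hx => ?_, hSh⟩)⟩
  exact hfin.mem_toFinset.2 (hS hx)

namespace IsSimpleSystem

variable {Δ : Finset V} (hΔ : IsSimpleSystem W z Δ)
include hΔ

theorem inner_pos {δ : V} (hδ : δ ∈ Δ) : 0 < ⟪z, δ⟫ := (hΔ.subset hδ).2

theorem mem_posRoots_or_neg_mem {α : V} (hα : α ∈ roots W) :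
    α ∈ posRoots W z ∨ -α ∈ posRoots W z := by
  rcases (hΔ.regular α hα).lt_or_gt with h | h
  · exact .inr ⟨neg_mem_roots hα, by rwa [inner_neg_right, neg_pos]⟩
  · exact .inl ⟨hα, h⟩

theorem notMem_hull_erase [DecidableEq V] {δ : V} (hδ : δ ∈ Δ) :
    δ ∉ hull ℝ (↑(Δ.erase δ) : Set V) := by
  intro h
  have hle : hull ℝ (Δ : Set V) ≤ hull ℝ (↑(Δ.erase δ) : Set V) := by
    refine Submodule.span_le.2 fun x hx => ?_
    by_cases hxδ : x = δ
    · exact hxδ ▸ h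
    · exact subset_hull (Finset.mem_erase.2 ⟨hxδ, hx⟩)
  have := hΔ.card_le (Δ.erase δ) (fun x hx => hΔ.subset (Finset.mem_of_mem_erase hx))
    fun β hβ => hle (hΔ.mem_hull β hβ)
  have := Finset.card_erase_lt_of_mem hδ
  omega

/-- Either `α` lies in the cone of the other simple roots, contradicting minimality, or pairing
with `z` gives a sign contradiction. -/
theorem smul_ne_smul_add_sum {α β : V} (hα : α ∈ Δ) (hβ : β ∈ Δ) (hne : α ≠ β) (a : ℝ) {b : ℝ}
    (hb : 0 < b) {c : V → ℝ} (hc : ∀ x, 0 ≤ c x) : a • α ≠ b • β + ∑ δ ∈ Δ, c δ • δ := by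
  classical
  intro h
  rw [← Finset.add_sum_erase Δ _ hα] at h
  have key : (a - c α) • α = b • β + ∑ δ ∈ Δ.erase α, c δ • δ := by
    rw [sub_smul, h]
    abel
  rcases lt_or_ge 0 (a - c α) with hpos | hnonpos
  · apply hΔ.notMem_hull_erase hα
    have hmem : (a - c α) • α ∈ hull ℝ (↑(Δ.erase α) : Set V) := by
      rw [key]
      exact add_mem (Submodule.smul_mem _ ⟨b, hb.le⟩
        (subset_hull (Finset.mem_erase.2 ⟨hne.symm, hβ⟩))) (mem_hull_finset_iff.2 ⟨c, hc, rfl⟩)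
    simpa [Nonneg.mk_smul, smul_smul, inv_mul_cancel₀ hpos.ne'] using
      Submodule.smul_mem _ ⟨(a - c α)⁻¹, inv_nonneg.2 hpos.le⟩ hmem
  · have := congrArg (inner ℝ z) key
    simp only [inner_add_right, inner_sum, real_inner_smul_right] at this
    have := mul_nonpos_of_nonpos_of_nonneg hnonpos (hΔ.inner_pos hα).le
    have := mul_pos hb (hΔ.inner_pos hβ)
    have : 0 ≤ ∑ δ ∈ Δ.erase α, c δ * ⟪z, δ⟫ := Finset.sum_nonneg fun δ hδ =>
      mul_nonneg (hc δ) (hΔ.inner_pos (Finset.mem_of_mem_erase hδ)).le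
    linarith

theorem inner_nonpos {α β : V} (hα : α ∈ Δ) (hβ : β ∈ Δ) (hne : α ≠ β) : ⟪α, β⟫ ≤ 0 := by
  by_contra! hpos
  have hαΦ := (hΔ.subset hα).1
  have hγ : reflectionAlong α β = β - (2 * ⟪α, β⟫) • α := reflectionAlong_apply hαΦ.1 β
  rcases hΔ.mem_posRoots_or_neg_mem (apply_mem_roots hαΦ.2 (hΔ.subset hβ).1) with h | h
  · obtain ⟨c, hc, hsum⟩ := mem_hull_finset_iff.1 (hΔ.mem_hull _ h)
    refine hΔ.smul_ne_smul_add_sum hβ hα hne.symm 1 (by positivity : 0 < 2 * ⟪α, β⟫) hc ?_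
    rw [hsum, hγ]
    module
  · obtain ⟨c, hc, hsum⟩ := mem_hull_finset_iff.1 (hΔ.mem_hull _ h)
    refine hΔ.smul_ne_smul_add_sum hα hβ hne (2 * ⟪α, β⟫) one_pos hc ?_
    rw [hsum, hγ]
    module

theorem linearIndepOn : LinearIndepOn ℝ id (Δ : Set V) :=
  linearIndepOn_of_inner_nonpos (fun _ => hΔ.inner_pos) fun _ hα _ hβ => hΔ.inner_nonpos hα hβ

/-- Otherwise `β` and `-reflectionAlong δ β` are nonnegative combinations of simple roots adding up
to a multiple of `δ`, so by independence `β` is a multiple of `δ`. -/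
theorem reflectionAlong_apply_mem_posRoots {δ β : V} (hδ : δ ∈ Δ) (hβ : β ∈ posRoots W z)
    (hne : β ≠ δ) : reflectionAlong δ β ∈ posRoots W z := by
  classical
  have hδΦ := (hΔ.subset hδ).1
  refine (hΔ.mem_posRoots_or_neg_mem (apply_mem_roots hδΦ.2 hβ.1)).resolve_right fun h => hne ?_
  obtain ⟨c, hc, hc_sum⟩ := mem_hull_finset_iff.1 (hΔ.mem_hull β hβ)
  obtain ⟨d, hd, hd_sum⟩ := mem_hull_finset_iff.1 (hΔ.mem_hull _ h)
  have hcoeff : ∀ x ∈ Δ, c x + d x = if x = δ then 2 * ⟪δ, β⟫ else 0 := by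
    refine linearIndepOn_finset_iffₛ.1 hΔ.linearIndepOn _ _ ?_
    simp only [id, add_smul, Finset.sum_add_distrib, hc_sum, hd_sum, ite_smul, zero_smul,
      Finset.sum_ite_eq', hδ, if_true, reflectionAlong_apply hδΦ.1]
    abel
  have hβδ : β = c δ • δ := by
    rw [← hc_sum]
    refine Finset.sum_eq_single_of_mem δ hδ fun x hx hxδ => ?_
    have := hcoeff x hx
    rw [if_neg hxδ] at this
    rw [show c x = 0 by linarith [hc x, hd x], zero_smul]
  have hcδ : c δ = 1 := by
    have := congrArg norm hβδ
    rwa [hβ.1.1, norm_smul, hδΦ.1, mul_one, Real.norm_of_nonneg (hc δ), eq_comm] at this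
  rw [hβδ, hcδ, one_smul]

/-- Induction on the height `⟪z, β⟫`: some simple root `δ` makes an acute angle with `β`, and
reflecting along it lowers the height. -/
theorem exists_mem_closure_apply_eq [Finite W] {β : V} (hβ : β ∈ posRoots W z) :
    ∃ g ∈ Subgroup.closure (reflectionAlong '' (Δ : Set V)), ∃ δ ∈ Δ, g δ = β := by
  have hwf : (posRoots W z).WellFoundedOn (Function.onFun (· < ·) fun β => ⟪z, β⟫) :=
    Set.wellFoundedOn_image.1
      (((roots_finite (W := W)).subset fun _ hα => hα.1).image _).wellFoundedOn
  refine hwf.induction (P := fun β => ∃ g ∈ Subgroup.closure (reflectionAlong '' (Δ : Set V)),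
    ∃ δ ∈ Δ, g δ = β) hβ fun β hβ ih => ?_
  obtain ⟨c, hc, hsum⟩ := mem_hull_finset_iff.1 (hΔ.mem_hull β hβ)
  obtain ⟨δ, hδ, hcδ⟩ : ∃ δ ∈ Δ, 0 < c δ * ⟪β, δ⟫ := by
    by_contra! h
    have : ⟪β, β⟫ = ∑ δ ∈ Δ, c δ * ⟪β, δ⟫ := by
      conv_lhs => enter [3]; rw [← hsum]
      simp only [inner_sum, real_inner_smul_right]
    rw [real_inner_self_eq_norm_sq, hβ.1.1] at this
    linarith [Finset.sum_nonpos h]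
  by_cases hβδ : β = δ
  · exact ⟨1, one_mem _, δ, hδ, hβδ.symm⟩
  have hδβ : 0 < ⟪δ, β⟫ := real_inner_comm β δ ▸ pos_of_mul_pos_right hcδ (hc δ)
  obtain ⟨g, hg, δ', hδ', hgδ'⟩ := ih _ (hΔ.reflectionAlong_apply_mem_posRoots hδ hβ hβδ) (by
    change ⟪z, reflectionAlong δ β⟫ < ⟪z, β⟫
    rw [reflectionAlong_apply (hΔ.subset hδ).1.1, inner_sub_right, real_inner_smul_right]
    nlinarith [hΔ.inner_pos hδ])
  refine ⟨reflectionAlong δ * g, mul_mem (Subgroup.subset_closure ⟨δ, hδ, rfl⟩) hg, δ', hδ', ?_⟩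
  rw [LinearIsometryEquiv.coe_mul, Function.comp_apply, hgδ', reflectionAlong_reflectionAlong]

theorem closure_roots_le [Finite W] : Subgroup.closure (reflectionAlong '' roots W) ≤
    Subgroup.closure (reflectionAlong '' (Δ : Set V)) := by
  refine (Subgroup.closure_le _).2 ?_
  rintro _ ⟨α, hα, rfl⟩
  obtain ⟨β, hβ, hβα⟩ : ∃ β ∈ posRoots W z, reflectionAlong β = reflectionAlong α := by
    rcases hΔ.mem_posRoots_or_neg_mem hα with h | h
    exacts [⟨α, h, rfl⟩, ⟨-α, h, reflectionAlong_neg α⟩]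
  obtain ⟨g, hg, δ, hδ, rfl⟩ := hΔ.exists_mem_closure_apply_eq hβ
  rw [← hβα, ← conj_reflectionAlong]
  exact mul_mem (mul_mem hg (Subgroup.subset_closure ⟨δ, hδ, rfl⟩)) (inv_mem hg)

/-- The deletion step of the exchange condition. -/
theorem exists_shorter_of_apply_notMem {l : List V} (hl : ∀ a ∈ l, a ∈ Δ) {δ : V} (hδ : δ ∈ Δ)
    (hneg : (l.map reflectionAlong).prod δ ∉ posRoots W z) :
    ∃ l' : List V, (∀ a ∈ l', a ∈ Δ) ∧ l'.length < l.length ∧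
      (l'.map reflectionAlong).prod = (l.map reflectionAlong).prod * reflectionAlong δ := by
  induction l with
  | nil => exact absurd (hΔ.subset hδ) hneg
  | cons a t ih =>
    simp only [List.mem_cons, forall_eq_or_imp] at hl
    by_cases hpos : (t.map reflectionAlong).prod δ ∈ posRoots W z
    · have heq : (t.map reflectionAlong).prod δ = a := by
        by_contra hne
        exact hneg (by simpa using hΔ.reflectionAlong_apply_mem_posRoots hl.1 hpos hne)
      refine ⟨t, hl.2, by simp, ?_⟩
      rw [List.map_cons, List.prod_cons, ← heq, ← conj_reflectionAlong]
      simp [mul_assoc, reflectionAlong_mul_self]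
    · obtain ⟨l', hl', hlen, hprod⟩ := ih hl.2 hpos
      exact ⟨a :: l', List.forall_mem_cons.2 ⟨hl.1, hl'⟩, by simpa using hlen,
        by simp [hprod, mul_assoc]⟩

/-- If `x δ` is positive for the last letter `δ` of a shortest word for `x`, the rest of the word
sends `δ` to a negative root, and the deletion step gives a shorter word. -/
theorem eq_one_of_forall_apply_mem_posRoots {x : V ≃ₗᵢ[ℝ] V}
    (hx : x ∈ Subgroup.closure (reflectionAlong '' (Δ : Set V)))
    (h : ∀ δ ∈ Δ, x δ ∈ posRoots W z) : x = 1 := by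
  suffices ∀ n (l : List V), l.length = n → (∀ a ∈ l, a ∈ Δ) →
      (∀ δ ∈ Δ, (l.map reflectionAlong).prod δ ∈ posRoots W z) →
      (l.map reflectionAlong).prod = 1 by
    obtain ⟨l, hl, rfl⟩ := exists_list_of_mem_closure_reflectionAlong hx
    exact this _ l rfl hl h
  intro n
  induction n using Nat.strong_induction_on with
  | _ n ih =>
  intro l hn hl h
  rcases l.eq_nil_or_concat' with rfl | ⟨l₀, δ, rfl⟩
  · rfl
  have hδ : δ ∈ Δ := hl δ (by simp)
  have hneg : (l₀.map reflectionAlong).prod δ ∉ posRoots W z := fun hpos => by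
    have := (h δ hδ).2
    simp only [List.map_append, List.map_cons, List.map_nil, List.prod_append, List.prod_cons,
      List.prod_nil, mul_one, LinearIsometryEquiv.coe_mul, Function.comp_apply,
      reflectionAlong_self, map_neg, inner_neg_right] at this
    linarith [hpos.2]
  obtain ⟨l', hl', hlt, hprod⟩ :=
    hΔ.exists_shorter_of_apply_notMem (fun a ha => hl a (by simp [ha])) hδ hneg
  have hsame : (l'.map reflectionAlong).prod = ((l₀ ++ [δ]).map reflectionAlong).prod := by
    simp [hprod]
  rw [← hsame] at h ⊢
  exact ih _ (by simp only [List.length_append, List.length_singleton] at hn; omega) l' rfl hl' h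

end IsSimpleSystem

theorem eq_one_of_apply_eq_self [Finite W] {x : V ≃ₗᵢ[ℝ] V}
    (hx : x ∈ Subgroup.closure (reflectionAlong '' roots W)) (hz : ∀ α ∈ roots W, ⟪z, α⟫ ≠ 0)
    (hxz : x z = z) : x = 1 := by
  obtain ⟨Δ, hΔ⟩ := exists_isSimpleSystem hz
  refine hΔ.eq_one_of_forall_apply_mem_posRoots (hΔ.closure_roots_le hx) fun δ hδ =>
    ⟨apply_mem_roots (closure_reflectionAlong_roots_le hx) (hΔ.subset hδ).1, ?_⟩
  rw [← hxz, x.inner_map_map]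
  exact hΔ.inner_pos hδ

end SimpleSystem

section MovedRoot

variable {V : Type*} [NormedAddCommGroup V] [InnerProductSpace ℝ V]

theorem exists_mem_forall_inner_ne_zero {S : Set V} (hS : S.Finite) (F : Submodule ℝ V)
    (h : ∀ α ∈ S, ∃ f ∈ F, ⟪f, α⟫ ≠ 0) : ∃ p ∈ F, ∀ α ∈ S, ⟪p, α⟫ ≠ 0 := by
  have : Finite S := hS
  by_contra! hcover
  obtain ⟨α, hα⟩ := Subspace.exists_eq_top_of_iUnion_eq_univ
    (p := fun α : S => LinearMap.ker (((innerSL ℝ (α : V)) : V →ₗ[ℝ] ℝ).comp F.subtype))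
    (Set.eq_univ_of_forall fun f => Set.mem_iUnion.2 <| by
      obtain ⟨α, hα, h0⟩ := hcover f f.2
      exact ⟨⟨α, hα⟩, by simpa [real_inner_comm] using h0⟩)
  obtain ⟨f, hf, hne⟩ := h α α.2
  have : (⟨f, hf⟩ : F) ∈ LinearMap.ker (((innerSL ℝ (α : V)) : V →ₗ[ℝ] ℝ).comp F.subtype) :=
    hα ▸ trivial
  exact hne (by simpa [real_inner_comm] using this)

/-- A generic vector of `Fix(x)` lies on every reflecting hyperplane that contains `Fix(x)` and on
no other; if there were no such hyperplane, `x` would fix a regular vector. -/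
theorem exists_mem_roots_mem_movedSpace {W : Subgroup (V ≃ₗᵢ[ℝ] V)} [Finite W]
    {x : V ≃ₗᵢ[ℝ] V} (hx : x ∈ Subgroup.closure (reflectionAlong '' roots W)) (hx1 : x ≠ 1) :
    ∃ α ∈ roots W, α ∈ movedSpace x := by
  by_contra! h
  have hnot : ∀ α ∈ roots W, ∃ f ∈ fixSpace x, ⟪f, α⟫ ≠ 0 := fun α hα => by
    simpa [movedSpace, mem_orthogonal] using h α hα
  obtain ⟨p, hp, hreg⟩ := exists_mem_forall_inner_ne_zero roots_finite _ hnot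
  exact hx1 (eq_one_of_apply_eq_self hx hreg hp)

end MovedRoot

section ReflectionLength

theorem reflLen_le_length {G : Type*} [Group G] {T : Set G} {l : List G} (hl : ∀ t ∈ l, t ∈ T) :
    reflLen T l.prod ≤ l.length :=
  Nat.sInf_le ⟨l, hl, rfl, rfl⟩

theorem exists_isRedDecomp {G : Type*} [Group G] {T : Set G} (hT : Subgroup.closure T = ⊤)
    (hinv : ∀ t ∈ T, t⁻¹ ∈ T) (x : G) : ∃ l, IsRedDecomp T x l := by
  have hne : {k | ∃ l : List G, (∀ t ∈ l, t ∈ T) ∧ l.length = k ∧ l.prod = x}.Nonempty := by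
    have hx : x ∈ (Subgroup.closure T).toSubmonoid := hT ▸ Subgroup.mem_top x
    rw [Subgroup.closure_toSubmonoid] at hx
    obtain ⟨l, hl, rfl⟩ := Submonoid.exists_list_of_mem_closure hx
    exact ⟨l.length, l, fun t ht => (hl t ht).elim id fun h => inv_inv t ▸ hinv _ h, rfl, rfl⟩
  obtain ⟨l, hl, hlen, hprod⟩ := Nat.sInf_mem hne
  exact ⟨l, hl, hprod, hlen⟩

variable {V : Type*} [NormedAddCommGroup V] [InnerProductSpace ℝ V] [FiniteDimensional ℝ V]
  {W : Subgroup (V ≃ₗᵢ[ℝ] V)}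

theorem movedRank_list_prod_le {l : List W} (hl : ∀ t ∈ l, t ∈ orthoRefls W) :
    movedRank (l.prod : V ≃ₗᵢ[ℝ] V) ≤ l.length := by
  induction l with
  | nil => simp [movedRank_eq_zero_iff]
  | cons t l ih =>
    rw [List.forall_mem_cons] at hl
    obtain ⟨α, -, hα⟩ := mem_orthoRefls_iff.1 hl.1
    calc movedRank ((t :: l).prod : V ≃ₗᵢ[ℝ] V)
        ≤ movedRank (t : V ≃ₗᵢ[ℝ] V) + movedRank (l.prod : V ≃ₗᵢ[ℝ] V) := by
          simpa using movedRank_mul_le _ _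
      _ ≤ 1 + l.length := add_le_add (hα ▸ movedRank_reflectionAlong_le_one α) (ih hl.2)
      _ = (t :: l).length := by simp [add_comm]

theorem exists_list_orthoRefls_length_le_movedRank [Finite W]
    (hgen : Subgroup.closure (orthoRefls W) = ⊤) (x : W) :
    ∃ l : List W, (∀ t ∈ l, t ∈ orthoRefls W) ∧ l.prod = x ∧
      l.length ≤ movedRank (x : V ≃ₗᵢ[ℝ] V) := by
  induction hn : movedRank (x : V ≃ₗᵢ[ℝ] V) using Nat.strong_induction_on generalizing x with
  | _ n ih =>
  by_cases hx1 : x = 1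
  · exact ⟨[], by simp, hx1.symm, by simp⟩
  have hx : (x : V ≃ₗᵢ[ℝ] V) ∈ Subgroup.closure (reflectionAlong '' roots W) := by
    rw [closure_reflectionAlong_roots hgen]
    exact x.2
  obtain ⟨α, hα, hmov⟩ := exists_mem_roots_mem_movedSpace hx (by simpa using hx1)
  let t : W := ⟨reflectionAlong α, hα.2⟩
  have hlt : movedRank ((t * x : W) : V ≃ₗᵢ[ℝ] V) < n :=
    hn ▸ movedRank_reflectionAlong_mul_lt (ne_zero_of_mem_roots hα) hmov
  obtain ⟨l, hl, hprod, hlen⟩ := ih _ hlt (t * x) rfl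
  refine ⟨t :: l, List.forall_mem_cons.2 ⟨mem_orthoRefls_iff.2 ⟨α, hα, rfl⟩, hl⟩, ?_, ?_⟩
  · rw [List.prod_cons, hprod, ← mul_assoc]
    simpa using Subtype.ext (reflectionAlong_mul_self α)
  · simp only [List.length_cons]
    omega

/-- Carter's lemma. -/
theorem reflLen_eq_movedRank [Finite W] (hgen : Subgroup.closure (orthoRefls W) = ⊤) (x : W) :
    reflLen (orthoRefls W) x = movedRank (x : V ≃ₗᵢ[ℝ] V) := by
  obtain ⟨l, hl, rfl, hlen⟩ := exists_list_orthoRefls_length_le_movedRank hgen x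
  obtain ⟨l', hl', hprod', hlen'⟩ :=
    exists_isRedDecomp hgen (fun _ => inv_mem_orthoRefls) l.prod
  refine le_antisymm ((reflLen_le_length hl).trans hlen) ?_
  rw [← hlen', ← hprod']
  exact movedRank_list_prod_le hl'

theorem absLe_iff_movedRankLE [Finite W] (hgen : Subgroup.closure (orthoRefls W) = ⊤) (x y : W) :
    absLe (orthoRefls W) x y ↔ MovedRankLE (x : V ≃ₗᵢ[ℝ] V) y := by
  simp only [absLe, MovedRankLE, reflLen_eq_movedRank hgen, Subgroup.coe_mul, Subgroup.coe_inv]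

end ReflectionLength

theorem fix_antiIsomorphism_of_interval_general
    {V : Type*} [NormedAddCommGroup V] [InnerProductSpace ℝ V] [FiniteDimensional ℝ V]
    (W : Subgroup (V ≃ₗᵢ[ℝ] V)) [Finite W]
    (hgen : Subgroup.closure (orthoRefls W) = ⊤)
    (w : W) :
    Set.InjOn (fixedSet W) (absInterval (orthoRefls W) w) ∧
    ∀ x ∈ absInterval (orthoRefls W) w, ∀ y ∈ absInterval (orthoRefls W) w,
      (absLe (orthoRefls W) x y ↔ fixedSet W y ⊆ fixedSet W x) := by
  have habs := absLe_iff_movedRankLE hgen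
  refine ⟨fun x hx y hy hxy => ?_, fun x hx y hy => ?_⟩
  · have hfix : fixSpace (x : V ≃ₗᵢ[ℝ] V) = fixSpace y := SetLike.coe_injective hxy
    have hx := (habs x w).1 hx
    have hy := (habs y w).1 hy
    exact Subtype.ext ((hx.of_fixSpace_le hy hfix.ge).antisymm (hy.of_fixSpace_le hx hfix.le))
  · rw [habs]
    exact ⟨MovedRankLE.fixSpace_le, ((habs x w).1 hx).of_fixSpace_le ((habs y w).1 hy)⟩

/-- Proposition: `Fix` is an anti-isomorphism of posets. For a
quasi-Coxeter element `w` of a finite real reflection group, `x ↦ Fix(x)` is injective on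
`[1,w]` (hence a bijection onto its image `𝓕(w)`), and `x ≼ y ↔ Fix(y) ⊆ Fix(x)` for
`x, y ∈ [1,w]`. -/
theorem fix_antiIsomorphism_of_interval
    {V : Type*} [NormedAddCommGroup V] [InnerProductSpace ℝ V] [FiniteDimensional ℝ V]
    (W : Subgroup (V ≃ₗᵢ[ℝ] V)) [Finite W]
    (hgen : Subgroup.closure (orthoRefls W) = ⊤)
    (w : W) (hqc : IsQuasiCoxeterElem (orthoRefls W) w) :
    Set.InjOn (fixedSet W) (absInterval (orthoRefls W) w) ∧
    ∀ x ∈ absInterval (orthoRefls W) w, ∀ y ∈ absInterval (orthoRefls W) w,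
      (absLe (orthoRefls W) x y ↔ fixedSet W y ⊆ fixedSet W x) :=
  fix_antiIsomorphism_of_interval_general W hgen w
end

section
/- Let P be the group presented on generators 𝐬₁, 𝐬₂, 𝐬₃, 𝐬₄ by the relations 𝐬₁𝐬₂𝐬₁ = 𝐬₂𝐬₁𝐬₂, 𝐬₃𝐬₄𝐬₃ = 𝐬₄𝐬₃𝐬₄, 𝐬₂𝐬₃𝐬₂𝐬₃ = 𝐬₃𝐬₂𝐬₃𝐬₂, 𝐬₁𝐬₄𝐬₁𝐬₄ = 𝐬₄𝐬₁𝐬₄𝐬₁, 𝐬₁𝐬₃ = 𝐬₃𝐬₁, 𝐬₂𝐬₄ = 𝐬₄𝐬₂ (the relations R(F₄(a₁)) of the Carter diagram F₄(a₁)), together with the commutator relator [𝐬₂, 𝐬₃]. Then P is isomorphic to the Artin group A(F₄). -/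
/-! Common definitions: reflection length, absolute order, interval groups,
quasi-Coxeter elements, Artin groups, Carter-diagram presentations. -/

open scoped commutatorElement

/-- The braid relations `R(F₄(a₁))` of the Carter diagram `F₄(a₁)`: with `𝐬ᵢ = of (i-1)`,
the 4-cycle `𝐬₁ — 𝐬₂ = 𝐬₃ — 𝐬₄ = 𝐬₁` where `{𝐬₁,𝐬₂}` and `{𝐬₃,𝐬₄}` are single bonds,
`{𝐬₂,𝐬₃}` and `{𝐬₁,𝐬₄}` are double bonds, and `{𝐬₁,𝐬₃}`, `{𝐬₂,𝐬₄}` commute. -/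
def F4a1Rels : Set (FreeGroup (Fin 4)) :=
  { FreeGroup.of 0 * FreeGroup.of 1 * FreeGroup.of 0 *
      (FreeGroup.of 1 * FreeGroup.of 0 * FreeGroup.of 1)⁻¹,
    FreeGroup.of 2 * FreeGroup.of 3 * FreeGroup.of 2 *
      (FreeGroup.of 3 * FreeGroup.of 2 * FreeGroup.of 3)⁻¹,
    FreeGroup.of 1 * FreeGroup.of 2 * FreeGroup.of 1 * FreeGroup.of 2 *
      (FreeGroup.of 2 * FreeGroup.of 1 * FreeGroup.of 2 * FreeGroup.of 1)⁻¹,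
    FreeGroup.of 0 * FreeGroup.of 3 * FreeGroup.of 0 * FreeGroup.of 3 *
      (FreeGroup.of 3 * FreeGroup.of 0 * FreeGroup.of 3 * FreeGroup.of 0)⁻¹,
    FreeGroup.of 0 * FreeGroup.of 2 * (FreeGroup.of 2 * FreeGroup.of 0)⁻¹,
    FreeGroup.of 1 * FreeGroup.of 3 * (FreeGroup.of 3 * FreeGroup.of 1)⁻¹ }

/-
Once `𝐬₂` and `𝐬₃` commute, their braid relation of length four is redundant, and what remains
are exactly the braid relations of the path `𝐬₂ — 𝐬₁ =4= 𝐬₄ — 𝐬₃`, which is the `F₄` diagram.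
Relabelling the generators along this path gives mutually inverse homomorphisms.
-/

section AltProd

variable {G : Type*} [Group G]

def altProd (a b : G) : ℕ → G
  | 0 => 1
  | n + 1 => a * altProd b a n

@[simp] lemma altProd_two (a b : G) : altProd a b 2 = a * b := by
  simp [altProd]

@[simp] lemma altProd_three (a b : G) : altProd a b 3 = a * b * a := by
  simp [altProd, mul_assoc]

@[simp] lemma altProd_four (a b : G) : altProd a b 4 = a * b * a * b := by
  simp [altProd, mul_assoc]

lemma lift_altWord {X : Type*} (f : X → G) (i j : X) (n : ℕ) :
    FreeGroup.lift f (altWord i j n) = altProd (f i) (f j) n := by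
  induction n generalizing i j with
  | zero => exact map_one _
  | succ n ih => rw [altWord, altProd, map_mul, FreeGroup.lift_apply_of, ih]

lemma Commute.altProd_four_eq {a b : G} (h : Commute a b) :
    altProd a b 4 = altProd b a 4 := by
  simp only [altProd_four, h.eq, mul_assoc, h.left_comm]

end AltProd

namespace PresentedGroup

variable {α β : Type*} {rels₁ : Set (FreeGroup α)} {rels₂ : Set (FreeGroup β)}

@[simp] lemma mk_of (a : α) : mk rels₁ (FreeGroup.of a) = of a := rfl

lemma mk_altWord (i j : α) (n : ℕ) :
    mk rels₁ (altWord i j n) = altProd (.of i) (.of j) n := by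
  induction n generalizing i j with
  | zero => exact map_one _
  | succ n ih => rw [altWord, altProd, map_mul, ih, mk_of]

def mulEquivOfEquiv (e : α ≃ β)
    (h₁ : ∀ r ∈ rels₁, FreeGroup.lift (fun a ↦ (of (e a) : PresentedGroup rels₂)) r = 1)
    (h₂ : ∀ r ∈ rels₂,
      FreeGroup.lift (fun b ↦ (of (e.symm b) : PresentedGroup rels₁)) r = 1) :
    PresentedGroup rels₁ ≃* PresentedGroup rels₂ :=
  (toGroup h₁).toMulEquiv (toGroup h₂)
    (ext fun a ↦ by simp only [MonoidHom.comp_apply, toGroup.of, Equiv.symm_apply_apply,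
      MonoidHom.id_apply])
    (ext fun b ↦ by simp only [MonoidHom.comp_apply, toGroup.of, Equiv.apply_symm_apply,
      MonoidHom.id_apply])

end PresentedGroup

namespace ArtinGroup

variable {B : Type*} {M : CoxeterMatrix B}

lemma altProd_of_eq_altProd_of (i j : B) :
    altProd (PresentedGroup.of i : ArtinGroup M) (.of j) (M i j) =
      altProd (.of j) (.of i) (M i j) := by
  obtain rfl | hij := eq_or_ne i j
  · rfl
  · rw [← PresentedGroup.mk_altWord, ← PresentedGroup.mk_altWord]
    exact PresentedGroup.mk_eq_mk_of_mul_inv_mem ⟨i, j, hij, rfl⟩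

lemma lift_eq_one_of_mem_artinRels {G : Type*} [Group G] {f : B → G}
    (hf : ∀ i j, i ≠ j → altProd (f i) (f j) (M i j) = altProd (f j) (f i) (M i j)) :
    ∀ r ∈ artinRels M, FreeGroup.lift f r = 1 := by
  rintro _ ⟨i, j, hij, rfl⟩
  rw [map_mul, map_inv, mul_inv_eq_one, lift_altWord, lift_altWord, hf i j hij]

lemma lift_eq_one_of_mem_artinRels_of_lt [LinearOrder B] {G : Type*} [Group G] {f : B → G}
    (hf : ∀ i j, i < j → altProd (f i) (f j) (M i j) = altProd (f j) (f i) (M i j)) :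
    ∀ r ∈ artinRels M, FreeGroup.lift f r = 1 :=
  lift_eq_one_of_mem_artinRels fun i j hij ↦ hij.lt_or_gt.elim (hf i j) fun hji ↦ by
    rw [M.symmetric i j]; exact (hf j i hji).symm

end ArtinGroup

abbrev carterF4Rels : Set (FreeGroup (Fin 4)) :=
  F4a1Rels ∪ {⁅FreeGroup.of (1 : Fin 4), FreeGroup.of (2 : Fin 4)⁆}

lemma CoxeterMatrix.F₄_M :
    CoxeterMatrix.F₄.M = !![1, 3, 2, 2; 3, 1, 4, 2; 2, 4, 1, 3; 2, 2, 3, 1] := rfl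

/-- Mathlib's `F₄` is the path `0 — 1 =4= 2 — 3`, traversed by `𝐬₂, 𝐬₁, 𝐬₄, 𝐬₃`. -/
def carterToDynkinF4 : Equiv.Perm (Fin 4) := ⟨![1, 0, 3, 2], ![1, 0, 3, 2], by decide, by decide⟩

lemma lift_carterF4Rels_eq_one : ∀ r ∈ carterF4Rels,
    FreeGroup.lift (fun i ↦ (.of (carterToDynkinF4 i) : ArtinGroup CoxeterMatrix.F₄)) r = 1 := by
  have braid (i j : Fin 4) := ArtinGroup.altProd_of_eq_altProd_of (M := CoxeterMatrix.F₄) i j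
  intro r hr
  simp only [carterF4Rels, F4a1Rels, Set.mem_union, Set.mem_insert_iff, Set.mem_singleton_iff] at hr
  rcases hr with ((rfl | rfl | rfl | rfl | rfl | rfl) | rfl) <;>
    simp only [map_mul, map_inv, map_commutatorElement, FreeGroup.lift_apply_of, mul_inv_eq_one,
      commutatorElement_eq_one_iff_mul_comm, carterToDynkinF4, Equiv.coe_fn_mk]
  · simpa [CoxeterMatrix.F₄_M] using braid 1 0
  · simpa [CoxeterMatrix.F₄_M] using braid 3 2
  · have comm03 : Commute (.of 0 : ArtinGroup CoxeterMatrix.F₄) (.of 3) := by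
      simpa [commute_iff_eq, CoxeterMatrix.F₄_M] using braid 0 3
    simpa using comm03.altProd_four_eq
  · simpa [CoxeterMatrix.F₄_M] using braid 1 2
  · simpa [CoxeterMatrix.F₄_M] using braid 1 3
  · simpa [CoxeterMatrix.F₄_M] using braid 0 2
  · simpa [CoxeterMatrix.F₄_M] using braid 0 3

lemma lift_artinRels_F₄_eq_one : ∀ r ∈ artinRels CoxeterMatrix.F₄,
    FreeGroup.lift (fun i ↦ (.of (carterToDynkinF4.symm i) : PresentedGroup carterF4Rels)) r =
      1 := by
  have rel : ∀ r ∈ F4a1Rels, PresentedGroup.mk carterF4Rels r = 1 := fun r hr ↦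
    PresentedGroup.one_of_mem (Or.inl hr)
  simp only [F4a1Rels, Set.forall_mem_insert, Set.mem_singleton_iff, forall_eq, map_mul, map_inv,
    mul_inv_eq_one, PresentedGroup.mk_of] at rel
  obtain ⟨braid01, braid23, -, braid03, comm02, comm13⟩ := rel
  have comm12 : (.of 1 * .of 2 : PresentedGroup carterF4Rels) = .of 2 * .of 1 :=
    commutatorElement_eq_one_iff_mul_comm.mp (PresentedGroup.one_of_mem (Or.inr rfl))
  refine ArtinGroup.lift_eq_one_of_mem_artinRels_of_lt fun i j hij ↦ ?_
  fin_cases i <;> fin_cases j <;> (try exact absurd hij (by decide))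
  · simpa [CoxeterMatrix.F₄_M, carterToDynkinF4] using braid01.symm
  · simpa [CoxeterMatrix.F₄_M, carterToDynkinF4] using comm13
  · simpa [CoxeterMatrix.F₄_M, carterToDynkinF4] using comm12
  · simpa [CoxeterMatrix.F₄_M, carterToDynkinF4] using braid03
  · simpa [CoxeterMatrix.F₄_M, carterToDynkinF4] using comm02
  · simpa [CoxeterMatrix.F₄_M, carterToDynkinF4] using braid23.symm

/-- presentation of `A(F₄)` from the Carter diagram `F₄(a₁)`. The group
presented by `R(F₄(a₁))` together with the commutator relator `[𝐬₂, 𝐬₃]` is isomorphic to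
the Artin group `A(F₄)`. -/
theorem artin_F4_carter_presentation :
    Nonempty (PresentedGroup
        (F4a1Rels ∪ {⁅FreeGroup.of (1 : Fin 4), FreeGroup.of (2 : Fin 4)⁆}) ≃*
      ArtinGroup CoxeterMatrix.F₄) :=
  ⟨PresentedGroup.mulEquivOfEquiv carterToDynkinF4 lift_carterF4Rels_eq_one
    lift_artinRels_F₄_eq_one⟩
end
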